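/- arXiv:2512.18169 — 4 statements merged into one kernel-verified Lean document; each statement's English description precedes it below -/
import Mathlib

section
/- For every n ≥ 2, the alternating power difference APD_m(fix) of the fixed point counting function on S_n vanishes for all 1 ≤ m ≤ n-2, and APD_{n-1}(fix) = n!. -/
open Finset Equiv

def APD {n : ℕ} (f : Equiv.Perm (Fin n) → ℤ) (m : ℕ) : ℤ :=
  ∑ σ : Equiv.Perm (Fin n), (Equiv.Perm.sign σ : ℤ) * (f σ) ^ m

def fixCount {n : ℕ} (σ : Equiv.Perm (Fin n)) : ℤ :=
  ((Finset.univ.filter fun i => σ i = i).card : ℤ)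

/-- fixCount to the m-th power counts m-tuples of fixed points. -/
lemma fixCount_pow {n : ℕ} (σ : Equiv.Perm (Fin n)) (m : ℕ) :
    fixCount σ ^ m =
      ∑ t : Fin m → Fin n, (if ∀ i, σ (t i) = t i then (1 : ℤ) else 0) := by
  classical
  rw [Finset.sum_boole]
  have h : (Finset.univ.filter fun t : Fin m → Fin n => ∀ i, σ (t i) = t i)
      = Fintype.piFinset (fun _ : Fin m => Finset.univ.filter fun x => σ x = x) := by
    ext t
    simp [Fintype.mem_piFinset]
  rw [h, Fintype.card_piFinset]
  simp [fixCount, Finset.prod_const]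

/-- Sum of signs over permutations fixing the range of `t` is zero if two points
outside the range exist. -/
lemma inner_zero {n m : ℕ} (t : Fin m → Fin n) (a b : Fin n) (hab : a ≠ b)
    (ha : ∀ i, t i ≠ a) (hb : ∀ i, t i ≠ b) :
    ∑ σ : Equiv.Perm (Fin n), (Equiv.Perm.sign σ : ℤ) *
      (if ∀ i, σ (t i) = t i then (1 : ℤ) else 0) = 0 := by
  classical
  apply Finset.sum_ninvolution (fun σ => Equiv.swap a b * σ)
  · intro σ
    have hsign : (Equiv.Perm.sign (Equiv.swap a b * σ) : ℤ) = -(Equiv.Perm.sign σ : ℤ) := by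
      simp [Equiv.Perm.sign_mul, Equiv.Perm.sign_swap hab]
    have hcond : (∀ i, (Equiv.swap a b * σ) (t i) = t i) ↔ (∀ i, σ (t i) = t i) := by
      constructor
      · intro h i
        have h2 := h i
        simp only [Equiv.Perm.mul_apply] at h2
        have : σ (t i) = Equiv.swap a b (t i) := by
          have := congrArg (Equiv.swap a b) h2
          simpa using this
        rw [this, Equiv.swap_apply_of_ne_of_ne (ha i) (hb i)]
      · intro h i
        simp only [Equiv.Perm.mul_apply, h i]
        exact Equiv.swap_apply_of_ne_of_ne (ha i) (hb i)
    by_cases hc : ∀ i, σ (t i) = t i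
    · rw [if_pos hc, if_pos (hcond.mpr hc), mul_one, mul_one, hsign]
      ring
    · rw [if_neg hc, if_neg (fun h => hc (hcond.mp h)), mul_zero, mul_zero, add_zero]
  · intro σ _ h
    have h1 : Equiv.swap a b = 1 := by
      have := congrArg (fun τ : Equiv.Perm (Fin n) => τ * σ⁻¹) h
      simpa [mul_assoc] using this
    exact hab (Equiv.swap_eq_one_iff.mp h1)
  · intro σ; exact Finset.mem_univ _
  · intro σ
    rw [← mul_assoc, Equiv.swap_mul_self, one_mul]

/-- If two points lie outside the range, apply inner_zero; existence from card bound. -/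
lemma exists_two_outside {n m : ℕ} (t : Fin m → Fin n) (h : m + 2 ≤ n) :
    ∃ a b : Fin n, a ≠ b ∧ (∀ i, t i ≠ a) ∧ (∀ i, t i ≠ b) := by
  classical
  have himg : (Finset.univ.image t).card ≤ m := by
    calc (Finset.univ.image t).card ≤ (Finset.univ : Finset (Fin m)).card :=
          Finset.card_image_le
      _ = m := by simp
  have hcompl : 2 ≤ (Finset.univ \ Finset.univ.image t).card := by
    rw [Finset.card_sdiff_of_subset (Finset.subset_univ _)]
    simp only [Finset.card_univ, Fintype.card_fin]
    omega
  obtain ⟨a, ha, b, hb, hab⟩ := Finset.one_lt_card.mp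
    (by omega : 1 < (Finset.univ \ Finset.univ.image t).card)
  refine ⟨a, b, hab, ?_, ?_⟩
  · intro i hi
    rw [Finset.mem_sdiff] at ha
    exact ha.2 (Finset.mem_image.mpr ⟨i, Finset.mem_univ _, hi⟩)
  · intro i hi
    rw [Finset.mem_sdiff] at hb
    exact hb.2 (Finset.mem_image.mpr ⟨i, Finset.mem_univ _, hi⟩)

lemma apd_eq_sum {n : ℕ} (m : ℕ) :
    APD (fixCount (n := n)) m =
      ∑ t : Fin m → Fin n, ∑ σ : Equiv.Perm (Fin n),
        (Equiv.Perm.sign σ : ℤ) * (if ∀ i, σ (t i) = t i then (1 : ℤ) else 0) := by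
  classical
  rw [APD]
  rw [Finset.sum_comm]
  congr 1
  ext σ
  rw [fixCount_pow, Finset.mul_sum]

theorem apd_fix_general (n : ℕ) (hn : 2 ≤ n) :
    (∀ m : ℕ, 1 ≤ m → m ≤ n - 2 → APD (fixCount (n := n)) m = 0) ∧
      APD (fixCount (n := n)) (n - 1) = (n.factorial : ℤ) := by
  classical
  constructor
  · intro m hm1 hm2
    rw [apd_eq_sum]
    apply Finset.sum_eq_zero
    intro t _
    obtain ⟨a, b, hab, ha, hb⟩ := exists_two_outside t (by omega)
    exact inner_zero t a b hab ha hb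
  · rw [apd_eq_sum]
    -- split over injectivity of t
    have hsplit : ∀ t : Fin (n - 1) → Fin n,
        (∑ σ : Equiv.Perm (Fin n), (Equiv.Perm.sign σ : ℤ) *
          (if ∀ i, σ (t i) = t i then (1 : ℤ) else 0)) =
        if Function.Injective t then 1 else 0 := by
      intro t
      by_cases hinj : Function.Injective t
      · -- only σ = 1 works
        rw [if_pos hinj]
        have huniq : ∀ σ : Equiv.Perm (Fin n), (∀ i, σ (t i) = t i) ↔ σ = 1 := by
          intro σ
          constructor
          · intro h
            -- range of t has n-1 elements, complement is a singleton
            have himg : (Finset.univ.image t).card = n - 1 := by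
              rw [Finset.card_image_of_injective _ hinj]
              simp
            apply Equiv.ext
            intro x
            show σ x = x
            by_contra hx
            -- x ∉ range t and σ x ∉ range t, distinct
            have hxr : x ∉ Finset.univ.image t := by
              intro hmem
              obtain ⟨i, _, rfl⟩ := Finset.mem_image.mp hmem
              exact hx (h i)
            have hsx : σ x ∉ Finset.univ.image t := by
              intro hmem
              obtain ⟨i, _, hi⟩ := Finset.mem_image.mp hmem
              have h3 : σ x = σ (t i) := by rw [h i, hi]
              exact hxr (Finset.mem_image.mpr ⟨i, Finset.mem_univ _, (σ.injective h3).symm⟩)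
            have hcompl : (Finset.univ \ Finset.univ.image t).card = 1 := by
              rw [Finset.card_sdiff_of_subset (Finset.subset_univ _), himg]
              simp only [Finset.card_univ, Fintype.card_fin]
              omega
            have h2 : 1 < (Finset.univ \ Finset.univ.image t).card := by
              apply Finset.one_lt_card.mpr
              exact ⟨x, Finset.mem_sdiff.mpr ⟨Finset.mem_univ _, hxr⟩,
                σ x, Finset.mem_sdiff.mpr ⟨Finset.mem_univ _, hsx⟩, fun hh => hx hh.symm⟩
            omega
          · intro h i; rw [h]; rfl
        rw [Finset.sum_eq_single (1 : Equiv.Perm (Fin n))]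
        · simp
        · intro σ _ hσ
          rw [if_neg (fun hc => hσ ((huniq σ).mp hc)), mul_zero]
        · intro h; exact absurd (Finset.mem_univ _) h
      · rw [if_neg hinj]
        -- image card ≤ n - 2
        have himg : (Finset.univ.image t).card ≤ n - 2 := by
          have hne : (Finset.univ.image t).card ≠ n - 1 := by
            intro hc
            apply hinj
            have hio : Set.InjOn t (Finset.univ : Finset (Fin (n-1))) :=
              Finset.injOn_of_card_image_eq (by rw [hc]; simp)
            intro x y hxy
            exact hio (by simp) (by simp) hxy
          have hle : (Finset.univ.image t).card ≤ n - 1 := by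
            calc (Finset.univ.image t).card ≤ (Finset.univ : Finset (Fin (n-1))).card :=
                  Finset.card_image_le
              _ = n - 1 := by simp
          omega
        have hex : ∃ a b : Fin n, a ≠ b ∧ (∀ i, t i ≠ a) ∧ (∀ i, t i ≠ b) := by
          have hcompl : 2 ≤ (Finset.univ \ Finset.univ.image t).card := by
            rw [Finset.card_sdiff_of_subset (Finset.subset_univ _)]
            simp only [Finset.card_univ, Fintype.card_fin]
            omega
          obtain ⟨a, ha', b, hb', hab⟩ := Finset.one_lt_card.mp
            (by omega : 1 < (Finset.univ \ Finset.univ.image t).card)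
          refine ⟨a, b, hab, ?_, ?_⟩
          · intro i hi
            exact (Finset.mem_sdiff.mp ha').2 (Finset.mem_image.mpr ⟨i, Finset.mem_univ _, hi⟩)
          · intro i hi
            exact (Finset.mem_sdiff.mp hb').2 (Finset.mem_image.mpr ⟨i, Finset.mem_univ _, hi⟩)
        obtain ⟨a, b, hab, ha, hb⟩ := hex
        exact inner_zero t a b hab ha hb
    calc (∑ t : Fin (n-1) → Fin n, ∑ σ : Equiv.Perm (Fin n),
            (Equiv.Perm.sign σ : ℤ) * (if ∀ i, σ (t i) = t i then (1 : ℤ) else 0))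
        = ∑ t : Fin (n-1) → Fin n, (if Function.Injective t then (1 : ℤ) else 0) := by
          exact Finset.sum_congr rfl fun t _ => hsplit t
      _ = ((Finset.univ.filter fun t : Fin (n-1) → Fin n => Function.Injective t).card : ℤ) := by
          rw [Finset.sum_boole]
      _ = (n.factorial : ℤ) := by
          have hcard : (Finset.univ.filter fun t : Fin (n-1) → Fin n =>
              Function.Injective t).card = Fintype.card (Fin (n-1) ↪ Fin n) := by
            rw [← Fintype.card_subtype]
            exact Fintype.card_congr (Equiv.subtypeInjectiveEquivEmbedding _ _)
          rw [hcard, Fintype.card_embedding_eq]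
          simp only [Fintype.card_fin]
          congr 1
          have h1 := Nat.factorial_mul_descFactorial (show n - 1 ≤ n by omega)
          have h2 : n - (n - 1) = 1 := by omega
          rw [h2, Nat.factorial_one, one_mul] at h1
          exact h1
end

section
/- For n ≥ 2, the first appearance degree of the fixed point function on S_n equals n-1: APD_m(fix) = 0 for 1 ≤ m < n-1 and APD_{n-1}(fix) ≠ 0. -/
open Finset Equiv

def innerS {n m : ℕ} (t : Fin m → Fin n) : ℤ :=
  ∑ σ ∈ Finset.univ.filter (fun σ : Equiv.Perm (Fin n) => ∀ j, σ (t j) = t j),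
    (Equiv.Perm.sign σ : ℤ)

lemma apd_eq (n m : ℕ) :
    APD (fixCount (n := n)) m = ∑ t : Fin m → Fin n, innerS t := by
  have key : ∀ σ : Equiv.Perm (Fin n),
      fixCount σ ^ m = ∑ t : Fin m → Fin n, if ∀ j, σ (t j) = t j then (1:ℤ) else 0 := by
    intro σ
    rw [Finset.sum_boole]
    have himg : (Finset.univ.filter fun t : Fin m → Fin n => ∀ j, σ (t j) = t j)
        = Fintype.piFinset (fun _ : Fin m => Finset.univ.filter fun i => σ i = i) := by
      ext t
      simp [Fintype.mem_piFinset]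
    rw [himg, Fintype.card_piFinset]
    simp [fixCount]
  unfold APD
  simp_rw [key, Finset.mul_sum, mul_ite, mul_one, mul_zero]
  rw [Finset.sum_comm]
  unfold innerS
  congr 1
  ext t
  rw [Finset.sum_filter]

lemma innerS_eq_zero {n m : ℕ} (t : Fin m → Fin n)
    (h : ∃ x y : Fin n, x ≠ y ∧ (∀ j, t j ≠ x) ∧ (∀ j, t j ≠ y)) :
    innerS t = 0 := by
  obtain ⟨x, y, hxy, hx, hy⟩ := h
  unfold innerS
  refine Finset.sum_involution (fun σ _ => Equiv.swap x y * σ) ?_ ?_ ?_ ?_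
  · intro σ hσ
    have : Equiv.Perm.sign (Equiv.swap x y * σ) = -Equiv.Perm.sign σ := by
      rw [Equiv.Perm.sign_mul, Equiv.Perm.sign_swap hxy, neg_one_mul]
    rw [this]; push_cast; ring
  · intro σ hσ _ heq
    have := congrArg (fun τ : Equiv.Perm (Fin n) => τ (σ⁻¹ x)) heq
    simp [Equiv.swap_apply_left] at this
    exact hxy this.symm
  · intro σ hσ
    simp only [Finset.mem_filter, Finset.mem_univ, true_and] at hσ ⊢
    intro j
    rw [Equiv.Perm.mul_apply, hσ j, Equiv.swap_apply_of_ne_of_ne (hx j) (hy j)]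
  · intro σ hσ
    show Equiv.swap x y * (Equiv.swap x y * σ) = σ
    rw [← mul_assoc, Equiv.swap_mul_self, one_mul]

lemma innerS_eq_one {n m : ℕ} (t : Fin m → Fin n)
    (h : (Finset.univ \ Finset.image t Finset.univ).card ≤ 1) :
    innerS t = 1 := by
  have hfe : (Finset.univ.filter (fun σ : Equiv.Perm (Fin n) => ∀ j, σ (t j) = t j)) = {1} := by
    ext σ
    simp only [Finset.mem_filter, Finset.mem_univ, true_and, Finset.mem_singleton]
    constructor
    · intro hσ
      have hsub : σ.support ⊆ Finset.univ \ Finset.image t Finset.univ := by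
        intro x hxs
        rw [Equiv.Perm.mem_support] at hxs
        simp only [Finset.mem_sdiff, Finset.mem_univ, true_and, Finset.mem_image]
        rintro ⟨j, -, rfl⟩
        exact hxs (hσ j)
      have hcard : σ.support.card ≤ 1 := le_trans (Finset.card_le_card hsub) h
      have hne : σ.support.card ≠ 1 := Equiv.Perm.card_support_ne_one σ
      have : σ.support.card = 0 := by omega
      rw [Finset.card_eq_zero] at this
      exact Equiv.Perm.support_eq_empty_iff.mp this
    · rintro rfl j; rfl
  rw [innerS, hfe]
  simp

theorem apd_fix_first_appearance (n : ℕ) (hn : 2 ≤ n) :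
    (∀ m : ℕ, 1 ≤ m → m < n - 1 → APD (fixCount (n := n)) m = 0) ∧
      APD (fixCount (n := n)) (n - 1) ≠ 0 := by
  have hcompl : ∀ {m : ℕ} (t : Fin m → Fin n),
      (Finset.univ \ Finset.image t Finset.univ).card = n - (Finset.image t Finset.univ).card := by
    intro m t
    rw [Finset.card_sdiff_of_subset (Finset.subset_univ _)]
    simp
  have two_le : ∀ {m : ℕ} (t : Fin m → Fin n),
      2 ≤ (Finset.univ \ Finset.image t Finset.univ).card →
      ∃ x y : Fin n, x ≠ y ∧ (∀ j, t j ≠ x) ∧ (∀ j, t j ≠ y) := by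
    intro m t h2
    obtain ⟨x, hx, y, hy, hxy⟩ := Finset.one_lt_card.mp
      (show 1 < (Finset.univ \ Finset.image t Finset.univ).card by omega)
    simp only [Finset.mem_sdiff, Finset.mem_univ, true_and, Finset.mem_image] at hx hy
    push_neg at hx hy
    exact ⟨x, y, hxy, hx, hy⟩
  constructor
  · intro m hm1 hmn
    rw [apd_eq]
    apply Finset.sum_eq_zero
    intro t _
    apply innerS_eq_zero
    apply two_le
    have himg : (Finset.image t Finset.univ).card ≤ m := by
      exact le_trans (Finset.card_image_le) (by simp)
    rw [hcompl]
    omega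
  · rw [apd_eq]
    have hpos : 0 < ∑ t : Fin (n-1) → Fin n, innerS t := by
      apply Finset.sum_pos'
      · intro t _
        by_cases h2 : 2 ≤ (Finset.univ \ Finset.image t Finset.univ).card
        · rw [innerS_eq_zero t (two_le t h2)]
        · rw [innerS_eq_one t (by omega)]; norm_num
      · refine ⟨fun j => Fin.castLE (Nat.sub_le n 1) j, Finset.mem_univ _, ?_⟩
        have hinj : Function.Injective (fun j : Fin (n-1) => Fin.castLE (Nat.sub_le n 1) j) :=
          Fin.castLE_injective _
        rw [innerS_eq_one]
        · norm_num
        · rw [hcompl, Finset.card_image_of_injective _ hinj]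
          simp
          omega
    omega
end

section
/- Let A be the 3×3 matrix A[i,j] = (j + (i-1)·d)^2 for an arbitrary positive integer d, and f(σ) = ∑_{i=1}^3 A[i, σ(i)]. Then APD_1(f) = APD_2(f) = 0 and APD_3(f) = (2d)^3 · 3! · (1!·2!) = 96·d^3. -/
/-- `f(σ) = ∑_i A[i,σ(i)]` for the `n×n` `d`-shifted 2nd power lattice
`A[i,j] = (j + (i-1)·d)^2` (1-based). -/
def fShift2 (n : ℕ) (d : ℤ) (σ : Equiv.Perm (Fin n)) : ℤ :=
  ∑ i : Fin n, (((σ i : ℕ) + 1 : ℤ) + (i : ℕ) * d) ^ 2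

theorem apd_shift2_3 (d : ℤ) (hd : 1 ≤ d) :
    APD (fShift2 3 d) 1 = 0 ∧ APD (fShift2 3 d) 2 = 0 ∧
      APD (fShift2 3 d) 3 = 96 * d ^ 3 := by
  have huniv : (Finset.univ : Finset (Equiv.Perm (Fin 3))) =
      {1, Equiv.swap 0 1, Equiv.swap 0 2, Equiv.swap 1 2,
        Equiv.swap 0 1 * Equiv.swap 1 2, Equiv.swap 1 2 * Equiv.swap 0 1} := by decide
  have key : ∀ m : ℕ, APD (fShift2 3 d) m =
      (1 + (2 + d) ^ 2 + (3 + 2 * d) ^ 2) ^ m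
      - (4 + (1 + d) ^ 2 + (3 + 2 * d) ^ 2) ^ m
      - (9 + (2 + d) ^ 2 + (1 + 2 * d) ^ 2) ^ m
      - (1 + (3 + d) ^ 2 + (2 + 2 * d) ^ 2) ^ m
      + (4 + (3 + d) ^ 2 + (1 + 2 * d) ^ 2) ^ m
      + (9 + (1 + d) ^ 2 + (2 + 2 * d) ^ 2) ^ m := by
    intro m
    simp only [APD, huniv]
    rw [Finset.sum_insert (by decide), Finset.sum_insert (by decide),
      Finset.sum_insert (by decide), Finset.sum_insert (by decide),
      Finset.sum_insert (by decide), Finset.sum_singleton]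
    simp only [fShift2, Fin.sum_univ_three, Equiv.Perm.mul_apply,
      Equiv.swap_apply_def, Equiv.Perm.one_apply]
    norm_num (config := { decide := true }) [Equiv.Perm.sign_swap, Equiv.Perm.sign_mul]
    ring
  refine ⟨?_, ?_, ?_⟩ <;> rw [key] <;> ring
end

section
/- Let H_3 be the 3×3 Hilbert matrix with entries H_3[i,j] = 1/(i+j-1) ∈ ℚ, and f(σ) = ∑_{i=1}^3 H_3[i, σ(i)]. Then APD_1(f) = 0 and APD_2(f) = 1/120 = det(H_3) · 3 · 3!, where det(H_3) = 1/2160. -/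
/-! $S_3$ has six elements, so `APD_m(f)` is a signed sum of the `m`-th powers of the six
diagonal sums `f σ`, namely `23/15` (identity), `6/5`, `1`, `3/2` (transpositions) and
`13/12` twice (3-cycles); both identities are then arithmetic, as is `det H_3 = 1/2160`. -/

def APDQ {n : ℕ} (f : Equiv.Perm (Fin n) → ℚ) (m : ℕ) : ℚ :=
  ∑ σ : Equiv.Perm (Fin n), (Equiv.Perm.sign σ : ℤ) * (f σ) ^ m

/-- The 3×3 Hilbert matrix `H_3[i,j] = 1/(i+j-1)` (1-based indices). -/
def Hilbert3 : Matrix (Fin 3) (Fin 3) ℚ :=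
  Matrix.of fun i j => 1 / ((i : ℕ) + (j : ℕ) + 1 : ℚ)

def fHilbert3 (σ : Equiv.Perm (Fin 3)) : ℚ :=
  ∑ i : Fin 3, Hilbert3 i (σ i)

open Equiv

lemma univ_perm_fin_three : (Finset.univ : Finset (Perm (Fin 3))) =
    {1, swap 0 1, swap 0 2, swap 1 2, finRotate 3, (finRotate 3)⁻¹} := by
  decide

lemma apdq_fin_three (f : Perm (Fin 3) → ℚ) (m : ℕ) :
    APDQ f m = f 1 ^ m - f (swap 0 1) ^ m - f (swap 0 2) ^ m - f (swap 1 2) ^ m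
      + f (finRotate 3) ^ m + f (finRotate 3)⁻¹ ^ m := by
  rw [APDQ, univ_perm_fin_three, Finset.sum_insert (by decide), Finset.sum_insert (by decide),
    Finset.sum_insert (by decide), Finset.sum_insert (by decide), Finset.sum_insert (by decide),
    Finset.sum_singleton]
  simp [sign_finRotate]
  ring

lemma fHilbert3_one : fHilbert3 1 = 23 / 15 := by
  simp [fHilbert3, Hilbert3, Fin.sum_univ_three]; norm_num

lemma fHilbert3_swap_zero_one : fHilbert3 (swap 0 1) = 6 / 5 := by
  simp [fHilbert3, Hilbert3, Fin.sum_univ_three, swap_apply_of_ne_of_ne]; norm_num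

lemma fHilbert3_swap_zero_two : fHilbert3 (swap 0 2) = 1 := by
  simp [fHilbert3, Hilbert3, Fin.sum_univ_three, swap_apply_of_ne_of_ne]; norm_num

lemma fHilbert3_swap_one_two : fHilbert3 (swap 1 2) = 3 / 2 := by
  simp [fHilbert3, Hilbert3, Fin.sum_univ_three, swap_apply_of_ne_of_ne]; norm_num

lemma fHilbert3_finRotate : fHilbert3 (finRotate 3) = 13 / 12 := by
  simp [fHilbert3, Hilbert3, Fin.sum_univ_three]; norm_num

lemma fHilbert3_finRotate_inv : fHilbert3 (finRotate 3)⁻¹ = 13 / 12 := by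
  simp [fHilbert3, Hilbert3, Fin.sum_univ_three]; norm_num

lemma apdq_fHilbert3 (m : ℕ) :
    APDQ fHilbert3 m = (23 / 15) ^ m - (6 / 5) ^ m - 1 ^ m - (3 / 2) ^ m + 2 * (13 / 12) ^ m := by
  rw [apdq_fin_three, fHilbert3_one, fHilbert3_swap_zero_one, fHilbert3_swap_zero_two,
    fHilbert3_swap_one_two, fHilbert3_finRotate, fHilbert3_finRotate_inv]
  ring

lemma det_hilbert3 : Hilbert3.det = 1 / 2160 := by
  rw [Matrix.det_fin_three]
  simp [Hilbert3]
  norm_num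

theorem apd_hilbert_3 :
    APDQ fHilbert3 1 = 0 ∧ APDQ fHilbert3 2 = 1 / 120 ∧
      Hilbert3.det = 1 / 2160 ∧
      APDQ fHilbert3 2 = Hilbert3.det * 3 * (Nat.factorial 3 : ℚ) := by
  have apd_two : APDQ fHilbert3 2 = 1 / 120 := by rw [apdq_fHilbert3]; norm_num
  refine ⟨by rw [apdq_fHilbert3]; norm_num, apd_two, det_hilbert3, ?_⟩
  rw [apd_two, det_hilbert3, Nat.factorial]
  norm_num
end
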